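/- arXiv:2404.19078 — 3 statements merged into one kernel-verified Lean document; each statement's English description precedes it below -/
import Mathlib

section
/- For every integer d ≥ 2, the number of basal billiard partitions with exactly d parts whose largest part is an odd number equals f_{d−2}, where f_0 = 1, f_1 = 1 and f_d = f_{d−1} + f_{d−2}. -/
/-- An Euclidean billiard partition, recorded as the strictly decreasing list
`m₁ > m₂ > ⋯ > m_d` of its parts: a nonempty strictly decreasing list of positive
integers whose smallest (last) part is even and in which no two adjacent parts
are both odd. -/
def IsEBP (l : List ℕ) : Prop :=
  l ≠ [] ∧ l.Chain' (fun a b => b < a) ∧ (∀ x ∈ l, 0 < x) ∧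
    (∀ m ∈ l.getLast?, Even m) ∧ l.Chain' (fun a b => ¬(Odd a ∧ Odd b))

/-- A basal billiard partition: an Euclidean billiard partition whose smallest
part equals `2` and in which adjacent parts differ by at most `2`. -/
def IsBasal (l : List ℕ) : Prop :=
  IsEBP l ∧ l.getLast? = some 2 ∧ l.Chain' (fun a b => a - b ≤ 2)

/-!
Read from the smallest part `2` upwards, a basal billiard partition climbs by steps of `1` or `2`,
and a step of `2` may only start from an even part. So the partitions with `d + 2` parts are
exactly those with `d + 1` parts topped by `b + 1` or, when their largest part `b` is even, by
`b + 2`. An odd largest part therefore sits on an even one, while an even largest part sits on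
either parity, and counting by the parity of the largest part gives the Fibonacci recursion.
-/
theorem isBasal_iff {l : List ℕ} :
    IsBasal l ↔ (l ≠ [] ∧ l.IsChain (fun a b => b < a) ∧ (∀ x ∈ l, 0 < x) ∧
      (∀ m ∈ l.getLast?, Even m) ∧ l.IsChain (fun a b => ¬(Odd a ∧ Odd b))) ∧
        l.getLast? = some 2 ∧ l.IsChain (fun a b => a - b ≤ 2) :=
  Iff.rfl

namespace IsBasal

theorem singleton_iff {a : ℕ} : IsBasal [a] ↔ a = 2 := by
  simp only [isBasal_iff, List.isChain_singleton, List.getLast?_singleton, Option.some.injEq,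
    and_true]
  constructor
  · exact And.right
  · rintro rfl
    simp

theorem cons_cons_iff' {m b : ℕ} {l : List ℕ} :
    IsBasal (m :: b :: l) ↔
      IsBasal (b :: l) ∧ b < m ∧ m - b ≤ 2 ∧ ¬(Odd m ∧ Odd b) := by
  simp only [isBasal_iff, List.isChain_cons_cons, List.getLast?_cons_cons,
    List.mem_cons, forall_eq_or_imp, ne_eq, reduceCtorEq, not_false_eq_true, true_and]
  constructor
  · rintro ⟨⟨⟨hbm, hdec⟩, ⟨-, hpos⟩, hlast, hmb, hpar⟩, h2, hdm, hdiff⟩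
    exact ⟨⟨⟨hdec, hpos, hlast, hpar⟩, h2, hdiff⟩, hbm, hdm, hmb⟩
  · rintro ⟨⟨⟨hdec, hpos, hlast, hpar⟩, h2, hdiff⟩, hbm, hdm, hmb⟩
    exact ⟨⟨⟨hbm, hdec⟩, ⟨hpos.1.trans hbm, hpos⟩, hlast, hmb, hpar⟩, h2, hdm, hdiff⟩

theorem cons_cons_iff {m b : ℕ} {l : List ℕ} :
    IsBasal (m :: b :: l) ↔ IsBasal (b :: l) ∧ (m = b + 1 ∨ m = b + 2 ∧ Even b) := by
  rw [cons_cons_iff']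
  refine and_congr_right fun _ => ?_
  simp only [Nat.odd_iff, Nat.even_iff]
  omega

end IsBasal

namespace BasalPartition

def withLargest (d : ℕ) (P : ℕ → Prop) : Set (List ℕ) :=
  {l | IsBasal l ∧ l.length = d ∧ ∃ m, l.head? = some m ∧ P m}

def extend (k : ℕ) (l : List ℕ) : List ℕ :=
  (l.headI + k) :: l

theorem extend_eq_extend_iff {j k : ℕ} {l l' : List ℕ} :
    extend j l = extend k l' ↔ j = k ∧ l = l' := by
  simp only [extend, List.cons.injEq]
  constructor
  · rintro ⟨h, rfl⟩
    exact ⟨by omega, rfl⟩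
  · rintro ⟨rfl, rfl⟩
    exact ⟨rfl, rfl⟩

theorem extend_injective (k : ℕ) : Function.Injective (extend k) :=
  fun _ _ h => (extend_eq_extend_iff.1 h).2

theorem mem_withLargest_one {P : ℕ → Prop} {l : List ℕ} :
    l ∈ withLargest 1 P ↔ l = [2] ∧ P 2 := by
  constructor
  · rintro ⟨hl, hlen, m, hm, hP⟩
    obtain ⟨a, rfl⟩ := List.length_eq_one_iff.1 hlen
    obtain rfl := IsBasal.singleton_iff.1 hl
    obtain rfl : m = 2 := by simpa using hm.symm
    exact ⟨rfl, hP⟩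
  · rintro ⟨rfl, hP⟩
    exact ⟨IsBasal.singleton_iff.2 rfl, rfl, 2, rfl, hP⟩

theorem withLargest_add_two (d : ℕ) (P : ℕ → Prop) :
    withLargest (d + 2) P =
      extend 1 '' withLargest (d + 1) (fun b => P (b + 1)) ∪
        extend 2 '' withLargest (d + 1) (fun b => Even b ∧ P (b + 2)) := by
  ext l
  constructor
  · rintro ⟨hl, hlen, m, hm, hP⟩
    obtain ⟨b, t, rfl⟩ : ∃ b t, l = m :: b :: t := by
      match l, hlen, hm with
      | m' :: b :: t, _, hm => exact ⟨b, t, by simpa using hm⟩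
    have hlen' : (b :: t).length = d + 1 := by simpa using hlen
    obtain ⟨hbt, rfl | ⟨rfl, hb⟩⟩ := IsBasal.cons_cons_iff.1 hl
    · exact .inl ⟨b :: t, ⟨hbt, hlen', b, rfl, hP⟩, rfl⟩
    · exact .inr ⟨b :: t, ⟨hbt, hlen', b, rfl, hb, hP⟩, rfl⟩
  · rintro (⟨l, ⟨hl, hlen, b, hb, hP⟩, rfl⟩ | ⟨l, ⟨hl, hlen, b, hb, hbe, hP⟩, rfl⟩) <;>
      obtain ⟨t, rfl⟩ := List.head?_eq_some_iff.1 hb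
    · exact ⟨IsBasal.cons_cons_iff.2 ⟨hl, .inl rfl⟩, by simpa [extend] using hlen, _, rfl, hP⟩
    · exact ⟨IsBasal.cons_cons_iff.2 ⟨hl, .inr ⟨rfl, hbe⟩⟩, by simpa [extend] using hlen, _, rfl,
        hP⟩

theorem finite_withLargest (d : ℕ) (P : ℕ → Prop) : (withLargest (d + 1) P).Finite := by
  induction d generalizing P with
  | zero => exact (Set.finite_singleton [2]).subset fun l hl => (mem_withLargest_one.1 hl).1
  | succ d ih =>
    rw [withLargest_add_two]
    exact ((ih _).image _).union ((ih _).image _)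

theorem ncard_withLargest_add_two (d : ℕ) (P : ℕ → Prop) :
    (withLargest (d + 2) P).ncard =
      (withLargest (d + 1) (fun b => P (b + 1))).ncard +
        (withLargest (d + 1) (fun b => Even b ∧ P (b + 2))).ncard := by
  have hdisj : Disjoint (extend 1 '' withLargest (d + 1) (fun b => P (b + 1)))
      (extend 2 '' withLargest (d + 1) (fun b => Even b ∧ P (b + 2))) :=
    Set.disjoint_image_image fun _ _ _ _ h => by simp [extend_eq_extend_iff] at h
  rw [withLargest_add_two, Set.ncard_union_eq hdisj ((finite_withLargest _ _).image _)
    ((finite_withLargest _ _).image _), Set.ncard_image_of_injective _ (extend_injective 1),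
    Set.ncard_image_of_injective _ (extend_injective 2)]

theorem ncard_withLargest_one_even : (withLargest 1 Even).ncard = 1 :=
  Set.ncard_eq_one.2 ⟨[2], Set.ext fun _ => by simp [mem_withLargest_one]⟩

theorem ncard_withLargest_one_odd : (withLargest 1 Odd).ncard = 0 := by
  rw [Set.ncard_eq_zero (finite_withLargest 0 Odd)]
  exact Set.eq_empty_of_forall_notMem fun _ hl => absurd (mem_withLargest_one.1 hl).2 (by decide)

theorem ncard_withLargest_odd_add_two (d : ℕ) :
    (withLargest (d + 2) Odd).ncard = (withLargest (d + 1) Even).ncard := by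
  have hempty : withLargest (d + 1) (fun b => Even b ∧ Odd (b + 2)) = ∅ :=
    Set.eq_empty_of_forall_notMem fun _ ⟨_, _, _, _, he, ho⟩ =>
      Nat.not_even_iff_odd.2 (by simpa [parity_simps] using ho) he
  rw [ncard_withLargest_add_two, hempty, Set.ncard_empty, add_zero]
  simp [parity_simps]

theorem ncard_withLargest_even_add_two (d : ℕ) :
    (withLargest (d + 2) Even).ncard =
      (withLargest (d + 1) Even).ncard + (withLargest (d + 1) Odd).ncard := by
  rw [ncard_withLargest_add_two]
  simp [parity_simps, add_comm]

theorem ncard_withLargest_even : ∀ n, (withLargest (n + 1) Even).ncard = Nat.fib (n + 1)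
  | 0 => ncard_withLargest_one_even
  | 1 => by
    rw [ncard_withLargest_even_add_two, ncard_withLargest_one_even, ncard_withLargest_one_odd]
    rfl
  | n + 2 => by
    rw [ncard_withLargest_even_add_two, ncard_withLargest_odd_add_two,
      ncard_withLargest_even (n + 1), ncard_withLargest_even n, Nat.fib_add_two (n := n + 1),
      add_comm]

end BasalPartition

theorem eq_fib_succ_of_rec {f : ℕ → ℕ} (h0 : f 0 = 1) (h1 : f 1 = 1)
    (hrec : ∀ n, f (n + 2) = f (n + 1) + f n) : ∀ n, f n = Nat.fib (n + 1)
  | 0 => h0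
  | 1 => h1
  | n + 2 => by
    rw [hrec, eq_fib_succ_of_rec h0 h1 hrec n, eq_fib_succ_of_rec h0 h1 hrec (n + 1),
      Nat.fib_add_two (n := n + 1), add_comm]

/-- For every `d ≥ 2`, the number of basal billiard partitions with exactly `d`
parts whose largest part is an odd number equals `f (d-2)`. -/
theorem number_of_basal_billiard_partitions_odd_largest (f : ℕ → ℕ)
    (h0 : f 0 = 1) (h1 : f 1 = 1) (hrec : ∀ n, f (n + 2) = f (n + 1) + f n) :
    ∀ d : ℕ, 2 ≤ d →
      {l : List ℕ | IsBasal l ∧ l.length = d ∧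
        ∃ m, l.head? = some m ∧ Odd m}.ncard = f (d - 2) := by
  intro d hd
  obtain ⟨n, rfl⟩ := Nat.exists_eq_add_of_le' hd
  rw [Nat.add_sub_cancel, eq_fib_succ_of_rec h0 h1 hrec]
  exact (BasalPartition.ncard_withLargest_odd_add_two n).trans
    (BasalPartition.ncard_withLargest_even n)
end

section
/- Let π = (m_1 > m_2 > ⋯ > m_d) be an Euclidean billiard partition with d parts. Then there exist a unique basal billiard partition (b_1 > b_2 > ⋯ > b_d) with d parts and unique even integers p_1 ≥ p_2 ≥ ⋯ ≥ p_d ≥ 0 such that m_i = b_i + p_i for all i. Conversely, for every basal billiard partition (b_1 > ⋯ > b_d) and every sequence of even integers p_1 ≥ p_2 ≥ ⋯ ≥ p_d ≥ 0, the sequence (b_1 + p_1, …, b_d + p_d) is an Euclidean billiard partition with d parts. -/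
theorem isEBP_singleton_iff {a : ℕ} : IsEBP [a] ↔ 0 < a ∧ Even a := by
  simp [IsEBP, List.Chain']

theorem isEBP_cons_cons_iff {a b : ℕ} {t : List ℕ} :
    IsEBP (a :: b :: t) ↔ IsEBP (b :: t) ∧ b < a ∧ ¬(Odd a ∧ Odd b) := by
  simp only [IsEBP, List.Chain', List.isChain_cons_cons, List.getLast?_cons_cons,
    List.mem_cons, forall_eq_or_imp, ne_eq, reduceCtorEq, not_false_eq_true, true_and]
  constructor
  · rintro ⟨⟨hba, hc⟩, ⟨-, hb, hp⟩, hl, ho, hco⟩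
    exact ⟨⟨hc, ⟨hb, hp⟩, hl, hco⟩, hba, ho⟩
  · rintro ⟨⟨hc, ⟨hb, hp⟩, hl, hco⟩, hba, ho⟩
    exact ⟨⟨hba, hc⟩, ⟨by omega, hb, hp⟩, hl, ho, hco⟩

theorem isBasal_singleton_iff {a : ℕ} : IsBasal [a] ↔ a = 2 := by
  simp only [IsBasal, isEBP_singleton_iff, List.getLast?_singleton, Option.some.injEq,
    List.Chain', List.isChain_singleton, and_true, and_iff_right_iff_imp]
  rintro rfl
  decide

theorem isBasal_cons_cons_iff {a b : ℕ} {t : List ℕ} :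
    IsBasal (a :: b :: t) ↔
      IsBasal (b :: t) ∧ b < a ∧ a - b ≤ 2 ∧ ¬(Odd a ∧ Odd b) := by
  simp only [IsBasal, isEBP_cons_cons_iff, List.getLast?_cons_cons, List.Chain',
    List.isChain_cons_cons]
  tauto

def parityGap (a b : ℕ) : ℕ := if a % 2 = b % 2 then 2 else 1

theorem parityGap_le_sub {a b : ℕ} (h : b < a) : parityGap a b ≤ a - b := by
  unfold parityGap; split_ifs <;> omega

theorem sub_eq_parityGap {a b : ℕ} (h : b < a) (h₂ : a - b ≤ 2) : a - b = parityGap a b := by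
  unfold parityGap; split_ifs <;> omega

def evenCount (l : List ℕ) : ℕ := l.countP (fun x => x % 2 = 0)

theorem evenCount_cons (a : ℕ) (l : List ℕ) :
    evenCount (a :: l) = evenCount l + if a % 2 = 0 then 1 else 0 := by
  simp [evenCount, List.countP_cons]

theorem evenCount_eq_of_map_mod_two_eq {l₁ l₂ : List ℕ}
    (h : l₁.map (· % 2) = l₂.map (· % 2)) : evenCount l₁ = evenCount l₂ := by
  have key (l : List ℕ) : evenCount l = (l.map (· % 2)).countP (· = 0) := by
    simp only [evenCount, List.countP_map]; rfl
  rw [key, key, h]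

def basalOf : List ℕ → List ℕ
  | [] => []
  | a :: t => (2 * evenCount (a :: t) + a % 2) :: basalOf t

theorem length_basalOf : ∀ l : List ℕ, (basalOf l).length = l.length
  | [] => rfl
  | _ :: t => by simp [basalOf, length_basalOf t]

theorem basalOf_singleton {a : ℕ} (h : Even a) : basalOf [a] = [2] := by
  simp [basalOf, evenCount, Nat.even_iff.1 h]

theorem basalOf_cons_cons {a b : ℕ} (t : List ℕ) (h : ¬(Odd a ∧ Odd b)) :
    basalOf (a :: b :: t) =
      (2 * evenCount (b :: t) + b % 2 + parityGap a b) :: basalOf (b :: t) := by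
  rw [basalOf, evenCount_cons, parityGap]
  simp only [Nat.odd_iff] at h
  congr 1
  split_ifs <;> omega

theorem basalOf_eq_of_map_mod_two_eq :
    ∀ {l₁ l₂ : List ℕ}, l₁.map (· % 2) = l₂.map (· % 2) → basalOf l₁ = basalOf l₂
  | [], [], _ => rfl
  | a :: t, a' :: t', h => by
    rw [basalOf, basalOf, evenCount_eq_of_map_mod_two_eq h]
    simp only [List.map_cons, List.cons.injEq] at h
    rw [h.1, basalOf_eq_of_map_mod_two_eq h.2]

theorem map_mod_two_zipWith_add :
    ∀ {b p : List ℕ}, p.length = b.length → (∀ x ∈ p, Even x) →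
      (List.zipWith (· + ·) b p).map (· % 2) = b.map (· % 2)
  | [], [], _, _ => rfl
  | x :: b, q :: p, hlen, hev => by
    have hq := Nat.even_iff.1 (hev q List.mem_cons_self)
    simp only [List.zipWith_cons_cons, List.map_cons, List.cons.injEq]
    exact ⟨by omega, map_mod_two_zipWith_add (by simpa using hlen)
      fun z hz => hev z (List.mem_cons_of_mem _ hz)⟩

theorem isBasal_basalOf : ∀ {l : List ℕ}, IsEBP l → IsBasal (basalOf l)
  | [a], hl => by
    rw [basalOf_singleton (isEBP_singleton_iff.1 hl).2, isBasal_singleton_iff]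
  | a :: b :: t, hl => by
    obtain ⟨ht, hba, hodd⟩ := isEBP_cons_cons_iff.1 hl
    rw [basalOf_cons_cons t hodd]
    refine isBasal_cons_cons_iff.2 ⟨isBasal_basalOf ht, ?_, ?_, ?_⟩ <;>
      simp only [parityGap, Nat.odd_iff] at hodd ⊢ <;> split_ifs <;> omega

theorem IsBasal.basalOf_eq : ∀ {b : List ℕ}, IsBasal b → basalOf b = b
  | [a], hb => by
    obtain rfl := isBasal_singleton_iff.1 hb
    rfl
  | a :: b :: t, hb => by
    obtain ⟨ht, hba, hgap, hodd⟩ := isBasal_cons_cons_iff.1 hb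
    have ih : basalOf (b :: t) = b :: t := ht.basalOf_eq
    have hhead : 2 * evenCount (b :: t) + b % 2 = b := (List.cons.inj ih).1
    rw [basalOf_cons_cons t hodd, ih, hhead, ← sub_eq_parityGap hba hgap,
      Nat.add_sub_cancel' hba.le]

theorem IsEBP.zipWith_add :
    ∀ {b p : List ℕ}, IsEBP b → p.length = b.length → p.IsChain (· ≥ ·) →
      (∀ x ∈ p, Even x) → IsEBP (List.zipWith (· + ·) b p)
  | [x], [q], hb, _, _, hev => by
    obtain ⟨hx, hxev⟩ := isEBP_singleton_iff.1 hb
    exact isEBP_singleton_iff.2 ⟨Nat.add_pos_left hx q, hxev.add (hev q List.mem_cons_self)⟩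
  | x :: y :: b, q :: r :: p, hb, hlen, hch, hev => by
    obtain ⟨ht, hyx, hodd⟩ := isEBP_cons_cons_iff.1 hb
    obtain ⟨hrq, hch⟩ := List.isChain_cons_cons.1 hch
    have ih := IsEBP.zipWith_add ht (by simpa using hlen) hch
      fun z hz => hev z (List.mem_cons_of_mem _ hz)
    have hq := Nat.even_iff.1 (hev q List.mem_cons_self)
    have hr := Nat.even_iff.1 (hev r (by simp))
    simp only [List.zipWith_cons_cons] at ih ⊢
    refine isEBP_cons_cons_iff.2 ⟨ih, by omega, ?_⟩
    simp only [Nat.odd_iff] at hodd ⊢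
    omega

theorem List.zipWith_add_left_cancel {α : Type*} [Add α] [IsLeftCancelAdd α] :
    ∀ {b p q : List α}, p.length = b.length → q.length = b.length →
      List.zipWith (· + ·) b p = List.zipWith (· + ·) b q → p = q
  | [], [], [], _, _, _ => rfl
  | x :: b, y :: p, z :: q, hp, hq, h => by
    simp only [List.zipWith_cons_cons, List.cons.injEq] at h
    rw [add_left_cancel h.1, zipWith_add_left_cancel (by simpa using hp)
      (by simpa using hq) h.2]

theorem IsEBP.exists_eq_zipWith_basalOf_add : ∀ {l : List ℕ}, IsEBP l →
    ∃ p : List ℕ, p.length = l.length ∧ p.IsChain (· ≥ ·) ∧ (∀ x ∈ p, Even x) ∧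
      l = List.zipWith (· + ·) (basalOf l) p
  | [a], hl => by
    obtain ⟨ha, haev⟩ := isEBP_singleton_iff.1 hl
    have ha2 := Nat.even_iff.1 haev
    refine ⟨[a - 2], rfl, .singleton _, ?_, ?_⟩
    · simp only [List.mem_singleton, forall_eq, Nat.even_iff]
      omega
    · rw [basalOf_singleton haev, List.zipWith_cons_cons, List.zipWith_nil_left]
      congr 1
      omega
  | a :: b :: t, hl => by
    obtain ⟨ht, hba, hodd⟩ := isEBP_cons_cons_iff.1 hl
    obtain ⟨_ | ⟨q, p⟩, hlen, hch, hev, heq⟩ := ht.exists_eq_zipWith_basalOf_add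
    · simp at hlen
    rw [basalOf, List.zipWith_cons_cons, List.cons.injEq] at heq
    rw [basalOf_cons_cons t hodd, basalOf]
    set y := 2 * evenCount (b :: t) + b % 2
    have hgap := parityGap_le_sub hba
    have hq := Nat.even_iff.1 (hev q List.mem_cons_self)
    refine ⟨(a - (y + parityGap a b)) :: q :: p, by simpa using hlen,
      List.isChain_cons_cons.2 ⟨by omega, hch⟩, ?_, ?_⟩
    · rintro z (_ | ⟨_, hz⟩)
      · simp only [parityGap, Nat.odd_iff, y] at hodd hgap ⊢
        rw [Nat.even_iff]
        split_ifs at hgap ⊢ <;> omega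
      · exact hev z hz
    · rw [List.zipWith_cons_cons, List.zipWith_cons_cons, ← heq.1, ← heq.2]
      congr 1
      omega

/-- Every Euclidean billiard partition `(m₁ > ⋯ > m_d)` is uniquely the sum of a
basal billiard partition `(b₁ > ⋯ > b_d)` with `d` parts and a weakly decreasing
sequence `p₁ ≥ p₂ ≥ ⋯ ≥ p_d ≥ 0` of even nonnegative integers (`m_i = b_i + p_i`);
conversely, any such sum is an Euclidean billiard partition with `d` parts. -/
theorem ebp_unique_basal_decomposition :
    (∀ l : List ℕ, IsEBP l →
      ∃! bp : List ℕ × List ℕ,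
        IsBasal bp.1 ∧ bp.1.length = l.length ∧ bp.2.length = l.length ∧
          bp.2.Chain' (fun a b => b ≤ a) ∧ (∀ x ∈ bp.2, Even x) ∧
          l = List.zipWith (· + ·) bp.1 bp.2) ∧
    (∀ b p : List ℕ, IsBasal b → p.length = b.length →
      p.Chain' (fun a b => b ≤ a) → (∀ x ∈ p, Even x) →
      IsEBP (List.zipWith (· + ·) b p)) := by
  refine ⟨fun l hl => ?_, fun b p hb hlen hch hev => hb.1.zipWith_add hlen hch hev⟩
  obtain ⟨p₀, hlen₀, hch₀, hev₀, hl₀⟩ := hl.exists_eq_zipWith_basalOf_add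
  refine ⟨(basalOf l, p₀), ⟨isBasal_basalOf hl, length_basalOf l, hlen₀, hch₀, hev₀, hl₀⟩, ?_⟩
  rintro ⟨b, p⟩ ⟨hb, hblen, hplen, -, hev, rfl⟩
  have hpb : p.length = b.length := hplen.trans hblen.symm
  have hbasal : basalOf (List.zipWith (· + ·) b p) = b :=
    (basalOf_eq_of_map_mod_two_eq (map_mod_two_zipWith_add hpb hev)).trans hb.basalOf_eq
  rw [hbasal] at hl₀ ⊢
  rw [List.zipWith_add_left_cancel hpb (hlen₀.trans hblen.symm) hl₀]
end

section
/- For every n ≥ 1, the following identity holds in the polynomial ring ℤ[z]: ∑_{d≥1} N(d, 3n+2)·z^d = (z^{n+1} + z^{n+2})·(1 + 3z + z²)^{n−1}, where N(d, m) denotes the number of basal P_{3,2}-partitions with smallest part 3, exactly d parts, and largest part m, and the left-hand sum has finitely many nonzero terms. -/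
/-- A basal `P_{3,2}`-partition with smallest part `3`, recorded as the strictly
increasing list of its parts: the first part is `3`, and each later part `b`
exceeds the previous part `a` by at most `3` if `3 ∣ b` and by at most `2`
otherwise. -/
def IsBasalP32 (l : List ℕ) : Prop :=
  l.head? = some 3 ∧
    l.Chain' (fun a b => a < b ∧ b - a ≤ if b % 3 = 0 then 3 else 2)

/-- `basalP32Count d m` is the number of basal `P_{3,2}`-partitions with
smallest part `3`, exactly `d` parts, and largest part `m`. -/
noncomputable def basalP32Count (d m : ℕ) : ℕ :=
  {l : List ℕ | IsBasalP32 l ∧ l.length = d ∧ l.getLast? = some m}.ncard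

/-!
Removing the largest part `m ≥ 4` of a basal partition leaves a basal partition whose largest
part is `m - 1`, `m - 2` or, when `3 ∣ m`, `m - 3`. Hence the polynomials
`G m = ∑ z ^ (number of parts)` over basal partitions with largest part `m` satisfy
`G m = z (G (m-1) + G (m-2) + [3 ∣ m] G (m-3))` with `G 2 = 0`, `G 3 = z`, and the closed forms
of `G (3n+2)`, `G (3n+3)`, `G (3n+4)` follow by a simultaneous induction on `n`.
-/

open Finset

def BasalStep (a b : ℕ) : Prop :=
  a < b ∧ b - a ≤ if b % 3 = 0 then 3 else 2

theorem isBasalP32_iff {l : List ℕ} :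
    IsBasalP32 l ↔ l.head? = some 3 ∧ l.IsChain BasalStep :=
  Iff.rfl

theorem isBasalP32_singleton {m : ℕ} : IsBasalP32 [m] ↔ m = 3 := by
  simp [isBasalP32_iff]

theorem isBasalP32_concat {l : List ℕ} {k m : ℕ} :
    IsBasalP32 (l ++ [k] ++ [m]) ↔ IsBasalP32 (l ++ [k]) ∧ BasalStep k m := by
  simp [isBasalP32_iff, and_assoc]

theorem basalStep_add_four_iff {k m : ℕ} :
    BasalStep k (m + 4) ↔ k = m + 3 ∨ k = m + 2 ∨ (k = m + 1 ∧ (m + 4) % 3 = 0) := by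
  unfold BasalStep
  split_ifs <;> omega

def basalListsEndingAt : ℕ → Finset (List ℕ)
  | 0 | 1 | 2 => ∅
  | 3 => {[3]}
  | m + 4 =>
    (basalListsEndingAt (m + 3) ∪ basalListsEndingAt (m + 2) ∪
      if (m + 4) % 3 = 0 then basalListsEndingAt (m + 1) else ∅).image (· ++ [m + 4])

theorem basalListsEndingAt_eq_empty {m : ℕ} (hm : m < 3) : basalListsEndingAt m = ∅ := by
  interval_cases m <;> rfl

theorem nil_notMem_basalListsEndingAt (m : ℕ) : [] ∉ basalListsEndingAt m := by
  match m with
  | 0 | 1 | 2 | 3 => simp [basalListsEndingAt]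
  | m + 4 => simp [basalListsEndingAt]

theorem append_singleton_mem_basalListsEndingAt {l : List ℕ} {b m : ℕ} :
    l ++ [b] ∈ basalListsEndingAt m ↔
      b = m ∧ ((l = [] ∧ m = 3) ∨ ∃ k, l ∈ basalListsEndingAt k ∧ BasalStep k m) := by
  obtain hm | ⟨m, rfl⟩ : m ≤ 3 ∨ ∃ m', m = m' + 4 := by
    rcases Nat.lt_or_ge m 4 with h | h
    exacts [Or.inl (by omega), Or.inr ⟨m - 4, by omega⟩]
  · have hpred : ¬ ∃ k, l ∈ basalListsEndingAt k ∧ BasalStep k m := fun ⟨k, hl, hk⟩ => by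
      rw [basalListsEndingAt_eq_empty (by have := hk.1; omega)] at hl
      simp at hl
    simp only [hpred, or_false]
    interval_cases m <;> cases l <;> simp [basalListsEndingAt]
  · simp only [basalListsEndingAt, basalStep_add_four_iff, mem_image, mem_union]
    by_cases h3 : (m + 4) % 3 = 0 <;>
      simp only [h3, ↓reduceIte, notMem_empty, or_false, List.append_singleton_inj, ↓existsAndEq,
        true_and, Nat.reduceEqDiff, and_false, and_true, and_or_left, exists_or, false_or] <;>
      tauto

theorem mem_basalListsEndingAt {l : List ℕ} {m : ℕ} :
    l ∈ basalListsEndingAt m ↔ IsBasalP32 l ∧ l.getLast? = some m := by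
  induction m using Nat.strong_induction_on generalizing l with
  | _ m ih =>
  rcases l.eq_nil_or_concat' with rfl | ⟨l, b, rfl⟩
  · simp [nil_notMem_basalListsEndingAt]
  rw [append_singleton_mem_basalListsEndingAt, List.getLast?_concat, Option.some_inj]
  rcases l.eq_nil_or_concat' with rfl | ⟨l, k, rfl⟩
  · simp only [List.nil_append, isBasalP32_singleton, nil_notMem_basalListsEndingAt, true_and,
      false_and, exists_const, or_false]
    omega
  rw [isBasalP32_concat]
  constructor
  · rintro ⟨rfl, ⟨h, -⟩ | ⟨j, hj, hstep⟩⟩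
    · simp at h
    · obtain ⟨hbasal, hlast⟩ := (ih j hstep.1).1 hj
      simp only [List.getLast?_concat, Option.some_inj] at hlast
      subst hlast
      exact ⟨⟨hbasal, hstep⟩, rfl⟩
  · rintro ⟨⟨hbasal, hstep⟩, rfl⟩
    exact ⟨rfl, .inr ⟨k, (ih k hstep.1).2 ⟨hbasal, List.getLast?_concat⟩, hstep⟩⟩

theorem length_add_two_le_of_mem_basalListsEndingAt {l : List ℕ} {m : ℕ}
    (hl : l ∈ basalListsEndingAt m) : l.length + 2 ≤ m := by
  induction m using Nat.strong_induction_on generalizing l with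
  | _ m ih =>
  rcases l.eq_nil_or_concat' with rfl | ⟨l, b, rfl⟩
  · exact absurd hl (nil_notMem_basalListsEndingAt m)
  obtain ⟨-, ⟨rfl, rfl⟩ | ⟨k, hk, hstep⟩⟩ := append_singleton_mem_basalListsEndingAt.1 hl
  · simp
  · have hlk := ih k hstep.1 hk
    have hkm := hstep.1
    simp only [List.length_append, List.length_singleton]
    omega

theorem disjoint_basalListsEndingAt {a b : ℕ} (h : a ≠ b) :
    Disjoint (basalListsEndingAt a) (basalListsEndingAt b) :=
  disjoint_left.2 fun _ ha hb => h <| Option.some_injective _ <|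
    (mem_basalListsEndingAt.1 ha).2.symm.trans (mem_basalListsEndingAt.1 hb).2

theorem basalP32Count_eq_card_filter (d m : ℕ) :
    basalP32Count d m = #{l ∈ basalListsEndingAt m | l.length = d} := by
  rw [basalP32Count, ← Set.ncard_coe_finset]
  congr 1
  ext l
  simp only [Set.mem_ofPred_eq, coe_filter, mem_basalListsEndingAt]
  tauto

theorem basalP32Count_eq_zero_of_lt {d m : ℕ} (h : m < d) : basalP32Count d m = 0 := by
  rw [basalP32Count_eq_card_filter, card_eq_zero, filter_eq_empty_iff]
  intro l hl hd
  have := length_add_two_le_of_mem_basalListsEndingAt hl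
  omega

section GenPoly

open Polynomial

variable (R : Type*) [CommSemiring R]

noncomputable def basalGenPoly (m : ℕ) : R[X] :=
  ∑ l ∈ basalListsEndingAt m, X ^ l.length

variable {R}

theorem basalGenPoly_eq_sum_basalP32Count (m : ℕ) :
    basalGenPoly R m = ∑ d ∈ Icc 1 m, (basalP32Count d m : R[X]) * X ^ d := by
  have hlen : ∀ l ∈ basalListsEndingAt m, l.length ∈ Icc 1 m := fun l hl => by
    have hne := ne_of_mem_of_not_mem hl (nil_notMem_basalListsEndingAt m)
    have := length_add_two_le_of_mem_basalListsEndingAt hl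
    exact mem_Icc.2 ⟨List.length_pos_iff.2 hne, by omega⟩
  rw [basalGenPoly, ← sum_fiberwise_of_maps_to hlen]
  refine sum_congr rfl fun d _ => ?_
  rw [sum_congr rfl fun l hl => by rw [(mem_filter.1 hl).2], sum_const, nsmul_eq_mul,
    basalP32Count_eq_card_filter]

theorem basalGenPoly_two : basalGenPoly R 2 = 0 := by
  simp [basalGenPoly, basalListsEndingAt]

theorem basalGenPoly_three : basalGenPoly R 3 = X := by
  simp [basalGenPoly, basalListsEndingAt]

theorem basalGenPoly_add_four (m : ℕ) :
    basalGenPoly R (m + 4) = X * (basalGenPoly R (m + 3) + basalGenPoly R (m + 2) +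
      if (m + 4) % 3 = 0 then basalGenPoly R (m + 1) else 0) := by
  have hd {a b : ℕ} (h : a ≠ b) := disjoint_basalListsEndingAt h
  unfold basalGenPoly
  rw [basalListsEndingAt, sum_image fun _ _ _ _ h => List.append_cancel_right h]
  simp only [List.length_append, List.length_singleton, pow_succ, ← sum_mul]
  split_ifs
  · rw [sum_union (disjoint_union_left.2 ⟨hd (by omega), hd (by omega)⟩),
      sum_union (hd (by omega))]
    ring
  · rw [union_empty, sum_union (hd (by omega))]
    ring

theorem basalGenPoly_closed_form (n : ℕ) :
    basalGenPoly R (3 * n + 5) = X ^ (n + 2) * (1 + X) * (1 + 3 * X + X ^ 2) ^ n ∧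
    basalGenPoly R (3 * n + 6) = X ^ (n + 2) * (1 + X) ^ 2 * (1 + 3 * X + X ^ 2) ^ n ∧
    basalGenPoly R (3 * n + 7) =
      X ^ (n + 3) * (1 + X) * (2 + X) * (1 + 3 * X + X ^ 2) ^ n := by
  induction n with
  | zero =>
    refine ⟨?_, ?_, ?_⟩ <;>
      simp only [basalGenPoly_add_four, basalGenPoly_three, basalGenPoly_two, Nat.reduceAdd,
        Nat.reduceMod, ↓reduceIte, one_ne_zero, OfNat.ofNat_ne_zero, mul_zero, zero_add, add_zero,
        pow_zero, mul_one] <;>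
      ring
  | succ n ih =>
    obtain ⟨g5, g6, g7⟩ := ih
    have r8 : basalGenPoly R (3 * n + 8) =
        X * (basalGenPoly R (3 * n + 7) + basalGenPoly R (3 * n + 6)) := by
      simpa [add_assoc] using basalGenPoly_add_four (R := R) (3 * n + 4)
    have r9 : basalGenPoly R (3 * n + 9) = X * (basalGenPoly R (3 * n + 8) +
        basalGenPoly R (3 * n + 7) + basalGenPoly R (3 * n + 6)) := by
      simpa [add_assoc] using basalGenPoly_add_four (R := R) (3 * n + 5)
    have r10 : basalGenPoly R (3 * n + 10) =
        X * (basalGenPoly R (3 * n + 9) + basalGenPoly R (3 * n + 8)) := by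
      simpa [add_assoc] using basalGenPoly_add_four (R := R) (3 * n + 6)
    have g8 : basalGenPoly R (3 * n + 8) =
        X ^ (n + 3) * (1 + X) * (1 + 3 * X + X ^ 2) ^ (n + 1) := by
      rw [r8, g7, g6]; ring
    have g9 : basalGenPoly R (3 * n + 9) =
        X ^ (n + 3) * (1 + X) ^ 2 * (1 + 3 * X + X ^ 2) ^ (n + 1) := by
      rw [r9, g8, g7, g6]; ring
    have g10 : basalGenPoly R (3 * n + 10) =
        X ^ (n + 4) * (1 + X) * (2 + X) * (1 + 3 * X + X ^ 2) ^ (n + 1) := by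
      rw [r10, g9, g8]; ring
    exact ⟨g8, g9, g10⟩

end GenPoly

open Polynomial in
/-- For every `n ≥ 1`, in `ℤ[z]`:
`∑_{d≥1} N(d, 3n+2)·z^d = (z^{n+1} + z^{n+2})·(1 + 3z + z²)^{n−1}`,
where `N(d,m)` is the number of basal `P_{3,2}`-partitions with smallest part
`3`, `d` parts, and largest part `m`; the sum on the left has finitely many
nonzero terms (indeed `N(d, 3n+2) = 0` for `d > 3n+2`), so it may be taken over
`1 ≤ d ≤ 3n+2`. -/
theorem basalP32_count_generating_polynomial (n : ℕ) (hn : 1 ≤ n) :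
    (∀ d : ℕ, 3 * n + 2 < d → basalP32Count d (3 * n + 2) = 0) ∧
    ∑ d ∈ Finset.Icc 1 (3 * n + 2),
        ((basalP32Count d (3 * n + 2) : Polynomial ℤ) * X ^ d) =
      (X ^ (n + 1) + X ^ (n + 2)) * (1 + 3 * X + X ^ 2) ^ (n - 1) := by
  refine ⟨fun d => basalP32Count_eq_zero_of_lt, ?_⟩
  obtain ⟨k, rfl⟩ : ∃ k, n = k + 1 := ⟨n - 1, by omega⟩
  rw [← basalGenPoly_eq_sum_basalP32Count, show 3 * (k + 1) + 2 = 3 * k + 5 by ring,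
    (basalGenPoly_closed_form k).1, Nat.add_sub_cancel]
  ring
end
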